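/- (Antisymmetrizer recursion used in the proof of the CHN identities.) For every integer k ≥ 1 the q-antisymmetrizers satisfy q^k A^{(k)} = (k+1)_q A^{(k+1)} + k_q A^{(k)} R̂_k A^{(k)}, as operators on V^{⊗(k+1)} (with A^{(k)} acting in the first k factors). -/
import Mathlib


open Finset

/-- Operators on `V^{⊗ m}` where `V = F^N`, represented as matrices indexed by
multi-indices `Fin m → Fin N`. -/
abbrev TensM (R : Type*) (N m : ℕ) := Matrix (Fin m → Fin N) (Fin m → Fin N) R

/-- Operators on `V ⊗ V`, i.e. `N² × N²` matrices. -/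
abbrev RMat (R : Type*) (N : ℕ) := Matrix (Fin N × Fin N) (Fin N × Fin N) R

/-- The `q`-number `k_q = (q^k - q^{-k})/(q - q^{-1})`. -/
noncomputable def qnum {F : Type*} [Field F] (q : F) (k : ℕ) : F :=
  (q ^ k - q⁻¹ ^ k) / (q - q⁻¹)

/-- Place an `N × N` matrix on the tensor leg number `i` (0-based) of `V^{⊗ m}`,
acting as the identity on all other legs. -/
def place1 {R : Type*} [Zero R] {N m : ℕ} (i : ℕ) (M : Matrix (Fin N) (Fin N) R) :
    TensM R N m :=
  Matrix.of fun a b =>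
    if h : i < m then
      if ∀ t : Fin m, t.val ≠ i → a t = b t then M (a ⟨i, h⟩) (b ⟨i, h⟩) else 0
    else 0

/-- Place an operator on `V ⊗ V` on the (0-based) tensor legs `i, i+1` of `V^{⊗ m}`,
acting as the identity on all other legs.  (So the paper's `R̂_i`, `1`-based, is
`place2 (i-1)`.) -/
def place2 {R : Type*} [Zero R] {N m : ℕ} (i : ℕ) (M : RMat R N) :
    TensM R N m :=
  Matrix.of fun a b =>
    if h : i + 1 < m then
      if ∀ t : Fin m, t.val ≠ i → t.val ≠ i + 1 → a t = b t then
        M (a ⟨i, by omega⟩, a ⟨i + 1, h⟩) (b ⟨i, by omega⟩, b ⟨i + 1, h⟩)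
      else 0
    else 0

/-- Embed an operator on `V^{⊗ k}` into `V^{⊗ m}` (`k ≤ m`), acting on the first `k`
tensor legs and as the identity on the remaining legs. -/
def embed {R : Type*} [Zero R] {N : ℕ} (m : ℕ) {k : ℕ} (M : TensM R N k) :
    TensM R N m :=
  Matrix.of fun a b =>
    if h : k ≤ m then
      if ∀ t : Fin m, k ≤ t.val → a t = b t then
        M (fun s => a ⟨s.val, lt_of_lt_of_le s.isLt h⟩)
          (fun s => b ⟨s.val, lt_of_lt_of_le s.isLt h⟩)
      else 0
    else 0

/-- The braid form of the Yang--Baxter equation `R̂₁ R̂₂ R̂₁ = R̂₂ R̂₁ R̂₂` on `V^{⊗3}`. -/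
def YangBaxter {F : Type*} [Field F] {N : ℕ} (Rh : RMat F N) : Prop :=
  (place2 0 Rh : TensM F N 3) * place2 1 Rh * place2 0 Rh =
    place2 1 Rh * place2 0 Rh * place2 1 Rh

/-- The Hecke condition `R̂² = I + (q - q⁻¹) R̂`. -/
def Hecke {F : Type*} [Field F] {N : ℕ} (q : F) (Rh : RMat F N) : Prop :=
  Rh * Rh = 1 + (q - q⁻¹) • Rh

/-- The `q`-antisymmetrizers `A^{(k)}`, defined inductively by `A^{(1)} = I` and
`A^{(k)} = (1/k_q) A^{(k-1)} (q^{k-1} - (k-1)_q R̂_{k-1}) A^{(k-1)}`. -/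
noncomputable def antis {F : Type*} [Field F] {N : ℕ} (Rh : RMat F N) (q : F) :
    (k : ℕ) → TensM F N k
  | 0 => 1
  | 1 => 1
  | k + 2 =>
      (qnum q (k + 2))⁻¹ •
        (embed (k + 2) (antis Rh q (k + 1)) *
          (q ^ (k + 1) • (1 : TensM F N (k + 2)) - qnum q (k + 1) • place2 k Rh) *
          embed (k + 2) (antis Rh q (k + 1)))

/-- The `q`-symmetrizers `S^{(k)}`, defined inductively by `S^{(1)} = I` and
`S^{(k)} = (1/k_q) S^{(k-1)} (q^{1-k} + (k-1)_q R̂_{k-1}) S^{(k-1)}`. -/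
noncomputable def syms {F : Type*} [Field F] {N : ℕ} (Rh : RMat F N) (q : F) :
    (k : ℕ) → TensM F N k
  | 0 => 1
  | 1 => 1
  | k + 2 =>
      (qnum q (k + 2))⁻¹ •
        (embed (k + 2) (syms Rh q (k + 1)) *
          (q⁻¹ ^ (k + 1) • (1 : TensM F N (k + 2)) + qnum q (k + 1) • place2 k Rh) *
          embed (k + 2) (syms Rh q (k + 1)))

/-- Partial trace over all tensor legs except the last one. -/
def trAllButLast {R : Type*} [AddCommMonoid R] {N : ℕ} :
    {m : ℕ} → TensM R N m → Matrix (Fin N) (Fin N) R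
  | 0, _ => 0
  | m + 1, M => Matrix.of fun x y => ∑ a : Fin m → Fin N, M (Fin.snoc a x) (Fin.snoc a y)

/-- Partial trace over all tensor legs except the first one. -/
def trAllButFirst {R : Type*} [AddCommMonoid R] {N : ℕ} :
    {m : ℕ} → TensM R N m → Matrix (Fin N) (Fin N) R
  | 0, _ => 0
  | m + 1, M => Matrix.of fun x y => ∑ a : Fin m → Fin N, M (Fin.cons x a) (Fin.cons y a)

/-- Extension of scalars `F → 𝒜` applied entrywise (scalar entries are central in `𝒜`). -/
def lift {F : Type*} [Field F] (𝒜 : Type*) [Ring 𝒜] [Algebra F 𝒜] {N m : ℕ}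
    (M : TensM F N m) : TensM 𝒜 N m := M.map (algebraMap F 𝒜)

/-- The product `R̂_{i+1} R̂_{i+2} ⋯ R̂_{i+l}` (1-based paper numbering), i.e. the product of
copies of `R̂` placed at 0-based positions `i, i+1, …, i+l-1` of `V^{⊗ m}`. -/
noncomputable def rChainFrom {F : Type*} [Field F] {N : ℕ} (m : ℕ) (Rh : RMat F N)
    (i : ℕ) : ℕ → TensM F N m
  | 0 => 1
  | l + 1 => rChainFrom m Rh i l * place2 (i + l) Rh

/-- The product `R̂₁ R̂₂ ⋯ R̂_l` (1-based paper numbering) on `V^{⊗ m}`. -/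
noncomputable def rChain {F : Type*} [Field F] {N : ℕ} (m : ℕ) (Rh : RMat F N)
    (l : ℕ) : TensM F N m := rChainFrom m Rh 0 l

/-- The product `T₁ T₂ ⋯ T_k` of copies of the quantum matrix `T` on `V^{⊗ m}`. -/
def Tprod {𝒜 : Type*} [Ring 𝒜] {N : ℕ} (m : ℕ) (T : Matrix (Fin N) (Fin N) 𝒜) :
    ℕ → TensM 𝒜 N m
  | 0 => 1
  | k + 1 => Tprod m T k * place1 k T

/-- The matrix `T₁T₂` on `V ⊗ V`, `(T₁T₂)^{ij}_{kl} = T^i_k T^j_l`. -/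
def TT {𝒜 : Type*} [Mul 𝒜] {N : ℕ} (T : Matrix (Fin N) (Fin N) 𝒜) : RMat 𝒜 N :=
  Matrix.of fun p r => T p.1 r.1 * T p.2 r.2

/-- The RTT relation `R̂ T₁T₂ = T₁T₂ R̂` (entries of `R̂` are central scalars). -/
def RTTrel {F : Type*} [Field F] {N : ℕ} (𝒜 : Type*) [Ring 𝒜] [Algebra F 𝒜]
    (Rh : RMat F N) (T : Matrix (Fin N) (Fin N) 𝒜) : Prop :=
  Rh.map (algebraMap F 𝒜) * TT T = TT T * Rh.map (algebraMap F 𝒜)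

/-- The `k`-th underlined power `T^{⟨k⟩} = Tr_{(1…k-1)} (R̂₁ ⋯ R̂_{k-1} T₁ ⋯ T_k)`. -/
noncomputable def underPow {F : Type*} [Field F] (𝒜 : Type*) [Ring 𝒜] [Algebra F 𝒜]
    {N : ℕ} (Rh : RMat F N) (T : Matrix (Fin N) (Fin N) 𝒜) :
    ℕ → Matrix (Fin N) (Fin N) 𝒜
  | 0 => 1
  | k + 1 => trAllButLast (lift 𝒜 (rChain (k + 1) Rh k) * Tprod (k + 1) T (k + 1))

/-- The `k`-th overlined power `T^{[k]} = Tr_{(2…k)} (R̂₁ ⋯ R̂_{k-1} T₁ ⋯ T_k)`. -/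
noncomputable def overPow {F : Type*} [Field F] (𝒜 : Type*) [Ring 𝒜] [Algebra F 𝒜]
    {N : ℕ} (Rh : RMat F N) (T : Matrix (Fin N) (Fin N) 𝒜) :
    ℕ → Matrix (Fin N) (Fin N) 𝒜
  | 0 => 1
  | k + 1 => trAllButFirst (lift 𝒜 (rChain (k + 1) Rh k) * Tprod (k + 1) T (k + 1))

/-- The `k`-th right wedge power `T^{∧k,r} = Tr_{(1…k-1)} (A^{(k)} T₁ ⋯ T_k)`. -/
noncomputable def wedgeR {F : Type*} [Field F] (𝒜 : Type*) [Ring 𝒜] [Algebra F 𝒜]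
    {N : ℕ} (Rh : RMat F N) (q : F) (T : Matrix (Fin N) (Fin N) 𝒜) :
    ℕ → Matrix (Fin N) (Fin N) 𝒜
  | 0 => 1
  | k + 1 => trAllButLast (lift 𝒜 (antis Rh q (k + 1)) * Tprod (k + 1) T (k + 1))

/-- The `k`-th left wedge power `T^{∧k,l} = Tr_{(2…k)} (A^{(k)} T₁ ⋯ T_k)`. -/
noncomputable def wedgeL {F : Type*} [Field F] (𝒜 : Type*) [Ring 𝒜] [Algebra F 𝒜]
    {N : ℕ} (Rh : RMat F N) (q : F) (T : Matrix (Fin N) (Fin N) 𝒜) :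
    ℕ → Matrix (Fin N) (Fin N) 𝒜
  | 0 => 1
  | k + 1 => trAllButFirst (lift 𝒜 (antis Rh q (k + 1)) * Tprod (k + 1) T (k + 1))

/-- The `k`-th right symmetric power `T^{Sk,r} = Tr_{(1…k-1)} (S^{(k)} T₁ ⋯ T_k)`. -/
noncomputable def sPowR {F : Type*} [Field F] (𝒜 : Type*) [Ring 𝒜] [Algebra F 𝒜]
    {N : ℕ} (Rh : RMat F N) (q : F) (T : Matrix (Fin N) (Fin N) 𝒜) :
    ℕ → Matrix (Fin N) (Fin N) 𝒜
  | 0 => 1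
  | k + 1 => trAllButLast (lift 𝒜 (syms Rh q (k + 1)) * Tprod (k + 1) T (k + 1))

/-- The `k`-th left symmetric power `T^{Sk,l} = Tr_{(2…k)} (S^{(k)} T₁ ⋯ T_k)`. -/
noncomputable def sPowL {F : Type*} [Field F] (𝒜 : Type*) [Ring 𝒜] [Algebra F 𝒜]
    {N : ℕ} (Rh : RMat F N) (q : F) (T : Matrix (Fin N) (Fin N) 𝒜) :
    ℕ → Matrix (Fin N) (Fin N) 𝒜
  | 0 => 1
  | k + 1 => trAllButFirst (lift 𝒜 (syms Rh q (k + 1)) * Tprod (k + 1) T (k + 1))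

/-- The elementary symmetric functions `σ_k(T) = q^k Tr_{(1…k)} (A^{(k)} T₁ ⋯ T_k)`
(with `σ₀(T) = 1`). -/
noncomputable def sigmaT {F : Type*} [Field F] (𝒜 : Type*) [Ring 𝒜] [Algebra F 𝒜]
    {N : ℕ} (Rh : RMat F N) (q : F) (T : Matrix (Fin N) (Fin N) 𝒜) (k : ℕ) : 𝒜 :=
  q ^ k • Matrix.trace (lift 𝒜 (antis Rh q k) * Tprod k T k)

/-- The complete symmetric functions `τ_k(T) = q^{-k} Tr_{(1…k)} (S^{(k)} T₁ ⋯ T_k)`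
(with `τ₀(T) = 1`). -/
noncomputable def tauT {F : Type*} [Field F] (𝒜 : Type*) [Ring 𝒜] [Algebra F 𝒜]
    {N : ℕ} (Rh : RMat F N) (q : F) (T : Matrix (Fin N) (Fin N) 𝒜) (k : ℕ) : 𝒜 :=
  q⁻¹ ^ k • Matrix.trace (lift 𝒜 (syms Rh q k) * Tprod k T k)

/-- The `q`-power sums `s_k(T) = Tr_{(1…k)} (R̂₁ ⋯ R̂_{k-1} T₁ ⋯ T_k)` (with `s₀(T) = 1`). -/
noncomputable def psum {F : Type*} [Field F] (𝒜 : Type*) [Ring 𝒜] [Algebra F 𝒜]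
    {N : ℕ} (Rh : RMat F N) (T : Matrix (Fin N) (Fin N) 𝒜) (k : ℕ) : 𝒜 :=
  Matrix.trace (lift 𝒜 (rChain k Rh (k - 1)) * Tprod k T k)

/-- `D_ℓ = (n_q / q^n) Tr_{(1…n-1)} A^{(n)}`. -/
noncomputable def Dleft {F : Type*} [Field F] {N : ℕ} (Rh : RMat F N) (q : F) (n : ℕ) :
    Matrix (Fin N) (Fin N) F :=
  (qnum q n / q ^ n) • trAllButLast (antis Rh q n)

/-- `D_r = (n_q / q^n) Tr_{(2…n)} A^{(n)}`. -/
noncomputable def Dright {F : Type*} [Field F] {N : ℕ} (Rh : RMat F N) (q : F) (n : ℕ) :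
    Matrix (Fin N) (Fin N) F :=
  (qnum q n / q ^ n) • trAllButFirst (antis Rh q n)

/-- The Reflection equation `R̂ L₁ R̂ L₁ = L₁ R̂ L₁ R̂` on `V ⊗ V`. -/
def RErel {F : Type*} [Field F] {N : ℕ} (𝒜 : Type*) [Ring 𝒜] [Algebra F 𝒜]
    (Rh : RMat F N) (L : Matrix (Fin N) (Fin N) 𝒜) : Prop :=
  lift 𝒜 (place2 0 Rh : TensM F N 2) * place1 0 L * lift 𝒜 (place2 0 Rh) * place1 0 L =
    place1 0 L * lift 𝒜 (place2 0 Rh) * place1 0 L * lift 𝒜 (place2 0 Rh)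

/-- `L_{k̄}` (0-based: `Lbar … 0 = L₁`, `Lbar … k = R̂_k (Lbar … (k-1)) R̂_k⁻¹`). -/
noncomputable def Lbar {F : Type*} [Field F] (𝒜 : Type*) [Ring 𝒜] [Algebra F 𝒜]
    {N : ℕ} (Rh : RMat F N) (m : ℕ) (L : Matrix (Fin N) (Fin N) 𝒜) :
    ℕ → TensM 𝒜 N m
  | 0 => place1 0 L
  | k + 1 => lift 𝒜 (place2 k Rh) * Lbar 𝒜 Rh m L k * lift 𝒜 (place2 k Rh⁻¹)

/-- The product `L_{1̄} L_{2̄} ⋯ L_{k̄}` on `V^{⊗ m}`. -/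
noncomputable def LbarProd {F : Type*} [Field F] (𝒜 : Type*) [Ring 𝒜] [Algebra F 𝒜]
    {N : ℕ} (Rh : RMat F N) (m : ℕ) (L : Matrix (Fin N) (Fin N) 𝒜) :
    ℕ → TensM 𝒜 N m
  | 0 => 1
  | k + 1 => LbarProd 𝒜 Rh m L k * Lbar 𝒜 Rh m L k

/-- Insertion of a copy of `D` on every tensor leg of `V^{⊗(m+1)}` except the first one. -/
def Dbig {F : Type*} [Field F] {N : ℕ} (D : Matrix (Fin N) (Fin N) F) (m : ℕ) :
    TensM F N (m + 1) :=
  Matrix.of fun a b =>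
    (if a 0 = b 0 then (1 : F) else 0) * ∏ t : Fin m, D (a t.succ) (b t.succ)

/-- `L^{∧k} = Tr_{q (2…k)} (A^{(k)} L_{1̄} ⋯ L_{k̄})`, the `q`-trace over the legs `2…k`,
with a copy of `D` inserted in each traced leg. -/
noncomputable def LwedgeRE {F : Type*} [Field F] (𝒜 : Type*) [Ring 𝒜] [Algebra F 𝒜]
    {N : ℕ} (Rh : RMat F N) (q : F) (D : Matrix (Fin N) (Fin N) F)
    (L : Matrix (Fin N) (Fin N) 𝒜) : ℕ → Matrix (Fin N) (Fin N) 𝒜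
  | 0 => 1
  | k + 1 => trAllButFirst
      (lift 𝒜 (antis Rh q (k + 1)) * LbarProd 𝒜 Rh (k + 1) L (k + 1) * lift 𝒜 (Dbig D k))

/-- `L^{Sk} = Tr_{q (2…k)} (S^{(k)} L_{1̄} ⋯ L_{k̄})`. -/
noncomputable def LsymRE {F : Type*} [Field F] (𝒜 : Type*) [Ring 𝒜] [Algebra F 𝒜]
    {N : ℕ} (Rh : RMat F N) (q : F) (D : Matrix (Fin N) (Fin N) F)
    (L : Matrix (Fin N) (Fin N) 𝒜) : ℕ → Matrix (Fin N) (Fin N) 𝒜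
  | 0 => 1
  | k + 1 => trAllButFirst
      (lift 𝒜 (syms Rh q (k + 1)) * LbarProd 𝒜 Rh (k + 1) L (k + 1) * lift 𝒜 (Dbig D k))

/-- `σ_k(L) = q^k Tr_q (L^{∧k})`, with `σ₀(L) = 1`;  `Tr_q X = Tr (D_r X)`. -/
noncomputable def sigmaRE {F : Type*} [Field F] (𝒜 : Type*) [Ring 𝒜] [Algebra F 𝒜]
    {N : ℕ} (Rh : RMat F N) (q : F) (D : Matrix (Fin N) (Fin N) F)
    (L : Matrix (Fin N) (Fin N) 𝒜) : ℕ → 𝒜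
  | 0 => 1
  | k + 1 => q ^ (k + 1) •
      Matrix.trace (D.map (algebraMap F 𝒜) * LwedgeRE 𝒜 Rh q D L (k + 1))

/-- `τ_k(L) = q^{-k} Tr_q (L^{Sk})`, with `τ₀(L) = 1`. -/
noncomputable def tauRE {F : Type*} [Field F] (𝒜 : Type*) [Ring 𝒜] [Algebra F 𝒜]
    {N : ℕ} (Rh : RMat F N) (q : F) (D : Matrix (Fin N) (Fin N) F)
    (L : Matrix (Fin N) (Fin N) 𝒜) : ℕ → 𝒜
  | 0 => 1
  | k + 1 => q⁻¹ ^ (k + 1) •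
      Matrix.trace (D.map (algebraMap F 𝒜) * LsymRE 𝒜 Rh q D L (k + 1))

section Machinery

open Kronecker

variable {F : Type*} [Field F] {N : ℕ}

/-- Place an `n`-leg operator on legs `j, …, j+n-1` of `V^{⊗m}`. -/
def plant {F : Type*} [Zero F] {N : ℕ} (j : ℕ) (m : ℕ) {n : ℕ} (M : TensM F N n) :
    TensM F N m :=
  Matrix.of fun a b =>
    if h : j + n ≤ m then
      if ∀ t : Fin m, (t.val < j ∨ j + n ≤ t.val) → a t = b t then
        M (fun s => a ⟨j + s.val, by omega⟩) (fun s => b ⟨j + s.val, by omega⟩)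
      else 0
    else 0

def wEquiv (N j n m : ℕ) (h : j + n ≤ m) :
    (Fin m → Fin N) ≃ (Fin n → Fin N) × ({t : Fin m // t.val < j ∨ j + n ≤ t.val} → Fin N) where
  toFun c := (fun s => c ⟨j + s.val, by omega⟩, fun t => c t.1)
  invFun p t :=
    if h' : j ≤ t.val ∧ t.val < j + n then p.1 ⟨t.val - j, by omega⟩ else p.2 ⟨t, by omega⟩
  left_inv c := by
    funext t
    dsimp only
    by_cases h' : j ≤ t.val ∧ t.val < j + n
    · rw [dif_pos h']
      exact congrArg c (Fin.ext (show j + (t.val - j) = t.val by omega))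
    · rw [dif_neg h']
  right_inv p := by
    refine Prod.ext (funext fun s => ?_) (funext fun s => ?_)
    · dsimp only
      rw [dif_pos (by omega : j ≤ j + s.val ∧ j + s.val < j + n)]
      exact congrArg p.1 (Fin.ext (show j + s.val - j = s.val by omega))
    · dsimp only
      rw [dif_neg (by omega : ¬(j ≤ (s : Fin m).val ∧ (s : Fin m).val < j + n))]

lemma plant_eq_kron {j m n : ℕ} (h : j + n ≤ m) (M : TensM F N n) :
    (plant j m M : TensM F N m) =
      (M ⊗ₖ (1 : Matrix ({t : Fin m // t.val < j ∨ j + n ≤ t.val} → Fin N)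
          ({t : Fin m // t.val < j ∨ j + n ≤ t.val} → Fin N) F)).submatrix
        (wEquiv N j n m h) (wEquiv N j n m h) := by
  ext a b
  simp only [plant, Matrix.of_apply, Matrix.submatrix_apply, Matrix.kroneckerMap_apply,
    Matrix.one_apply, wEquiv, Equiv.coe_fn_mk, dif_pos h]
  by_cases hc : ∀ t : Fin m, (t.val < j ∨ j + n ≤ t.val) → a t = b t
  · have hfe : (fun t : {t : Fin m // t.val < j ∨ j + n ≤ t.val} => a t.1) = fun t => b t.1 :=
      funext fun t => hc t.1 t.2
    rw [if_pos hc, if_pos hfe, mul_one]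
  · have hfe : ¬((fun t : {t : Fin m // t.val < j ∨ j + n ≤ t.val} => a t.1) = fun t => b t.1) :=
      fun hcc => hc fun t ht => congrFun hcc ⟨t, ht⟩
    rw [if_neg hc, if_neg hfe, mul_zero]

lemma plant_mul {j m n : ℕ} (h : j + n ≤ m) (X Y : TensM F N n) :
    (plant j m (X * Y) : TensM F N m) = plant j m X * plant j m Y := by
  rw [plant_eq_kron h, plant_eq_kron h, plant_eq_kron h,
    Matrix.submatrix_mul_equiv _ _ _ (wEquiv N j n m h) _, ← Matrix.mul_kronecker_mul,
    one_mul]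

lemma plant_one {j m n : ℕ} (h : j + n ≤ m) :
    (plant j m (1 : TensM F N n) : TensM F N m) = 1 := by
  rw [plant_eq_kron h, Matrix.one_kronecker_one, Matrix.submatrix_one_equiv]

lemma plant_smul {j m n : ℕ} (c : F) (M : TensM F N n) :
    (plant j m (c • M) : TensM F N m) = c • plant j m M := by
  ext a b
  simp only [plant, Matrix.of_apply, Matrix.smul_apply]
  split_ifs <;> simp

lemma plant_sub {j m n : ℕ} (X Y : TensM F N n) :
    (plant j m (X - Y) : TensM F N m) = plant j m X - plant j m Y := by
  ext a b
  simp only [plant, Matrix.of_apply, Matrix.sub_apply]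
  split_ifs <;> simp

lemma plant_add {j m n : ℕ} (X Y : TensM F N n) :
    (plant j m (X + Y) : TensM F N m) = plant j m X + plant j m Y := by
  ext a b
  simp only [plant, Matrix.of_apply, Matrix.add_apply]
  split_ifs <;> simp

end Machinery
section Machinery2

variable {F : Type*} [Field F] {N : ℕ}

lemma plant_apply {j m n : ℕ} (h : j + n ≤ m) (M : TensM F N n) (a b : Fin m → Fin N) :
    (plant j m M : TensM F N m) a b =
      if ∀ t : Fin m, (t.val < j ∨ j + n ≤ t.val) → a t = b t then
        M (fun s => a ⟨j + s.val, by omega⟩) (fun s => b ⟨j + s.val, by omega⟩)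
      else 0 := by
  simp only [plant, Matrix.of_apply, dif_pos h]

lemma plant_comm {j n j' n' m : ℕ} (h1 : j + n ≤ j') (h2 : j' + n' ≤ m)
    (X : TensM F N n) (Y : TensM F N n') :
    (plant j m X : TensM F N m) * plant j' m Y = plant j' m Y * plant j m X := by
  have hjm : j + n ≤ m := by omega
  ext a b
  rw [Matrix.mul_apply, Matrix.mul_apply]
  have key : ∀ c : Fin m → Fin N,
      (plant j m X : TensM F N m) a c * (plant j' m Y : TensM F N m) c b =
      (plant j' m Y : TensM F N m) a c * (plant j m X : TensM F N m) c b → True := fun _ _ => trivial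
  set c₁ : Fin m → Fin N := fun t => if j ≤ t.val ∧ t.val < j + n then b t else a t with hc₁
  set c₂ : Fin m → Fin N := fun t => if j' ≤ t.val ∧ t.val < j' + n' then b t else a t with hc₂
  rw [Finset.sum_eq_single c₁ ?v1 (by simp), Finset.sum_eq_single c₂ ?v2 (by simp)]
  case v1 =>
    intro c _ hne
    rw [plant_apply hjm, plant_apply h2]
    by_cases P1 : ∀ t : Fin m, (t.val < j ∨ j + n ≤ t.val) → a t = c t
    · by_cases P2 : ∀ t : Fin m, (t.val < j' ∨ j' + n' ≤ t.val) → c t = b t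
      · exfalso
        apply hne
        funext t
        by_cases ht : j ≤ t.val ∧ t.val < j + n
        · rw [hc₁]; dsimp only; rw [if_pos ht]
          exact P2 t (by omega)
        · rw [hc₁]; dsimp only; rw [if_neg ht]
          exact (P1 t (by omega)).symm
      · rw [if_neg P2, mul_zero]
    · rw [if_neg P1, zero_mul]
  case v2 =>
    intro c _ hne
    rw [plant_apply h2, plant_apply hjm]
    by_cases P1 : ∀ t : Fin m, (t.val < j' ∨ j' + n' ≤ t.val) → a t = c t
    · by_cases P2 : ∀ t : Fin m, (t.val < j ∨ j + n ≤ t.val) → c t = b t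
      · exfalso
        apply hne
        funext t
        by_cases ht : j' ≤ t.val ∧ t.val < j' + n'
        · rw [hc₂]; dsimp only; rw [if_pos ht]
          exact P2 t (by omega)
        · rw [hc₂]; dsimp only; rw [if_neg ht]
          exact (P1 t (by omega)).symm
      · rw [if_neg P2, mul_zero]
    · rw [if_neg P1, zero_mul]
  -- main values
  rw [plant_apply hjm, plant_apply h2, plant_apply h2, plant_apply hjm]
  have e1 : ∀ t : Fin m, (t.val < j ∨ j + n ≤ t.val) → a t = c₁ t := by
    intro t ht; rw [hc₁]; dsimp only; rw [if_neg (by omega)]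
  have e2 : ∀ t : Fin m, (t.val < j' ∨ j' + n' ≤ t.val) → a t = c₂ t := by
    intro t ht; rw [hc₂]; dsimp only; rw [if_neg (by omega)]
  rw [if_pos e1, if_pos e2]
  have w1 : (fun s : Fin n => c₁ ⟨j + s.val, by omega⟩) = fun s : Fin n => b ⟨j + s.val, by omega⟩ := by
    funext s; rw [hc₁]; dsimp only; rw [if_pos (by constructor <;> [omega; exact by omega])]
  have w1' : (fun s : Fin n' => c₁ ⟨j' + s.val, by omega⟩) = fun s : Fin n' => a ⟨j' + s.val, by omega⟩ := by
    funext s; rw [hc₁]; dsimp only; rw [if_neg (by omega)]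
  have w2 : (fun s : Fin n' => c₂ ⟨j' + s.val, by omega⟩) = fun s : Fin n' => b ⟨j' + s.val, by omega⟩ := by
    funext s; rw [hc₂]; dsimp only; rw [if_pos (by omega)]
  have w2' : (fun s : Fin n => c₂ ⟨j + s.val, by omega⟩) = fun s : Fin n => a ⟨j + s.val, by omega⟩ := by
    funext s; rw [hc₂]; dsimp only; rw [if_neg (by omega)]
  rw [w1, w1', w2, w2']
  have hiff : (∀ t : Fin m, (t.val < j' ∨ j' + n' ≤ t.val) → c₁ t = b t) ↔
      (∀ t : Fin m, (t.val < j ∨ j + n ≤ t.val) → c₂ t = b t) := by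
    constructor
    · intro H t ht
      rw [hc₂]; dsimp only
      by_cases h' : j' ≤ t.val ∧ t.val < j' + n'
      · rw [if_pos h']
      · rw [if_neg h']
        have := H t (by omega)
        rw [hc₁] at this; dsimp only at this; rwa [if_neg (by omega)] at this
    · intro H t ht
      rw [hc₁]; dsimp only
      by_cases h' : j ≤ t.val ∧ t.val < j + n
      · rw [if_pos h']
      · rw [if_neg h']
        have := H t (by omega)
        rw [hc₂] at this; dsimp only at this; rwa [if_neg (by omega)] at this
  by_cases HH : ∀ t : Fin m, (t.val < j' ∨ j' + n' ≤ t.val) → c₁ t = b t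
  · rw [if_pos HH, if_pos (hiff.mp HH), mul_comm]
  · rw [if_neg HH, if_neg (fun H => HH (hiff.mpr H)), mul_zero, mul_zero]

end Machinery2
section Machinery3

variable {F : Type*} [Field F] {N : ℕ}

def pairEquiv (N : ℕ) : (Fin 2 → Fin N) ≃ Fin N × Fin N where
  toFun c := (c 0, c 1)
  invFun p := ![p.1, p.2]
  left_inv c := by
    funext t
    fin_cases t <;> rfl
  right_inv p := rfl

lemma place2_eq_plant {i m : ℕ} (h : i + 1 < m) (M : RMat F N) :
    (place2 i M : TensM F N m) = plant i m (M.submatrix (pairEquiv N) (pairEquiv N)) := by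
  ext a b
  simp only [place2, plant, Matrix.of_apply]
  rw [dif_pos h, dif_pos (show i + 2 ≤ m by omega)]
  have hcond : (∀ t : Fin m, t.val ≠ i → t.val ≠ i + 1 → a t = b t) ↔
      (∀ t : Fin m, (t.val < i ∨ i + 2 ≤ t.val) → a t = b t) :=
    ⟨fun H t ht => H t (by omega) (by omega), fun H t h1 h2 => H t (by omega)⟩
  rw [if_congr hcond rfl rfl]
  by_cases hc : ∀ t : Fin m, (t.val < i ∨ i + 2 ≤ t.val) → a t = b t
  · rw [if_pos hc, if_pos hc]
    rfl
  · rw [if_neg hc, if_neg hc]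

lemma place2_mul {i m : ℕ} (h : i + 1 < m) (M M' : RMat F N) :
    (place2 i (M * M') : TensM F N m) = place2 i M * place2 i M' := by
  rw [place2_eq_plant h, place2_eq_plant h, place2_eq_plant h, ← plant_mul (by omega),
    ← Matrix.submatrix_mul_equiv M M' _ (pairEquiv N) _]

lemma place2_one {i m : ℕ} (h : i + 1 < m) :
    (place2 i (1 : RMat F N) : TensM F N m) = 1 := by
  rw [place2_eq_plant h, Matrix.submatrix_one_equiv, plant_one (by omega)]

lemma place2_smul {i m : ℕ} (c : F) (M : RMat F N) :
    (place2 i (c • M) : TensM F N m) = c • place2 i M := by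
  ext a b
  simp only [place2, Matrix.of_apply, Matrix.smul_apply]
  split_ifs <;> simp

lemma place2_add {i m : ℕ} (M M' : RMat F N) :
    (place2 i (M + M') : TensM F N m) = place2 i M + place2 i M' := by
  ext a b
  simp only [place2, Matrix.of_apply, Matrix.add_apply]
  split_ifs <;> simp

lemma embed_eq_plant {k m : ℕ} (h : k ≤ m) (X : TensM F N k) :
    (embed m X : TensM F N m) = plant 0 m X := by
  ext a b
  simp only [embed, plant, Matrix.of_apply]
  rw [dif_pos h, dif_pos (show 0 + k ≤ m by omega)]
  have hcond : (∀ t : Fin m, k ≤ t.val → a t = b t) ↔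
      (∀ t : Fin m, (t.val < 0 ∨ 0 + k ≤ t.val) → a t = b t) :=
    ⟨fun H t ht => H t (by omega), fun H t ht => H t (by omega)⟩
  have harg : ∀ c : Fin m → Fin N,
      (fun s : Fin k => c ⟨s.val, by omega⟩) = fun s : Fin k => c ⟨0 + s.val, by omega⟩ := by
    intro c; funext s; exact congrArg c (Fin.ext (show s.val = 0 + s.val by omega))
  rw [if_congr hcond (by rw [harg a, harg b]) rfl]

lemma embed_mul {k m : ℕ} (h : k ≤ m) (X Y : TensM F N k) :
    (embed m (X * Y) : TensM F N m) = embed m X * embed m Y := by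
  rw [embed_eq_plant h, embed_eq_plant h, embed_eq_plant h, plant_mul (by omega)]

lemma embed_one {k m : ℕ} (h : k ≤ m) :
    (embed m (1 : TensM F N k) : TensM F N m) = 1 := by
  rw [embed_eq_plant h, plant_one (by omega)]

lemma embed_smul {k m : ℕ} (c : F) (X : TensM F N k) :
    (embed m (c • X) : TensM F N m) = c • embed m X := by
  ext a b
  simp only [embed, Matrix.of_apply, Matrix.smul_apply]
  split_ifs <;> simp

lemma embed_sub {k m : ℕ} (X Y : TensM F N k) :
    (embed m (X - Y) : TensM F N m) = embed m X - embed m Y := by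
  ext a b
  simp only [embed, Matrix.of_apply, Matrix.sub_apply]
  split_ifs <;> simp

lemma embed_embed {k k' m : ℕ} (h1 : k ≤ k') (h2 : k' ≤ m) (X : TensM F N k) :
    (embed m (embed k' X) : TensM F N m) = embed m X := by
  ext a b
  simp only [embed, Matrix.of_apply]
  rw [dif_pos h2, dif_pos (le_trans h1 h2), dif_pos h1]
  by_cases H : ∀ t : Fin m, k ≤ t.val → a t = b t
  · have Ho : ∀ t : Fin m, k' ≤ t.val → a t = b t := fun t ht => H t (le_trans h1 ht)
    have Hi : ∀ s : Fin k', k ≤ s.val →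
        a ⟨s.val, by omega⟩ = b ⟨s.val, by omega⟩ := fun s hs => H _ hs
    rw [if_pos Ho, if_pos Hi, if_pos H]
  · rw [if_neg H]
    by_cases H2 : ∀ t : Fin m, k' ≤ t.val → a t = b t
    · have Hni : ¬∀ s : Fin k', k ≤ s.val → a ⟨s.val, by omega⟩ = b ⟨s.val, by omega⟩ := by
        intro Hin
        apply H
        intro t ht
        by_cases htk : k' ≤ t.val
        · exact H2 t htk
        · exact Hin ⟨t.val, by omega⟩ ht
      rw [if_pos H2, if_neg Hni]
    · rw [if_neg H2]

lemma embed_place2 {i k m : ℕ} (h1 : i + 1 < k) (h2 : k ≤ m) (M : RMat F N) :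
    (embed m (place2 i M : TensM F N k) : TensM F N m) = place2 i M := by
  ext a b
  simp only [embed, place2, Matrix.of_apply]
  rw [dif_pos h2, dif_pos h1, dif_pos (show i + 1 < m by omega)]
  by_cases H : ∀ t : Fin m, t.val ≠ i → t.val ≠ i + 1 → a t = b t
  · have Ho : ∀ t : Fin m, k ≤ t.val → a t = b t := fun t ht => H t (by omega) (by omega)
    have Hi : ∀ s : Fin k, s.val ≠ i → s.val ≠ i + 1 →
        a ⟨s.val, by omega⟩ = b ⟨s.val, by omega⟩ :=
      fun s hs1 hs2 => H ⟨s.val, by omega⟩ hs1 hs2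
    rw [if_pos Ho, if_pos Hi, if_pos H]
  · rw [if_neg H]
    by_cases H2 : ∀ t : Fin m, k ≤ t.val → a t = b t
    · have Hni : ¬∀ s : Fin k, s.val ≠ i → s.val ≠ i + 1 →
          a ⟨s.val, by omega⟩ = b ⟨s.val, by omega⟩ := by
        intro Hin
        apply H
        intro t ht1 ht2
        by_cases htk : k ≤ t.val
        · exact H2 t htk
        · exact Hin ⟨t.val, by omega⟩ ht1 ht2
      rw [if_pos H2, if_neg Hni]
    · rw [if_neg H2]

lemma embed_comm_place2 {K i m : ℕ} (hK : K ≤ i) (hi : i + 1 < m)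
    (X : TensM F N K) (M : RMat F N) :
    (place2 i M : TensM F N m) * embed m X = embed m X * place2 i M := by
  rw [embed_eq_plant (show K ≤ m by omega), place2_eq_plant hi]
  exact (plant_comm (by omega) (by omega) X _).symm

lemma plant_place2 {i j n m : ℕ} (h1 : i + 1 < n) (h2 : j + n ≤ m) (M : RMat F N) :
    (plant j m (place2 i M : TensM F N n) : TensM F N m) = place2 (j + i) M := by
  ext a b
  simp only [plant, place2, Matrix.of_apply]
  rw [dif_pos h2, dif_pos h1, dif_pos (show j + i + 1 < m by omega)]
  by_cases H : ∀ t : Fin m, t.val ≠ j + i → t.val ≠ j + i + 1 → a t = b t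
  · have Ho : ∀ t : Fin m, (t.val < j ∨ j + n ≤ t.val) → a t = b t :=
      fun t ht => H t (by omega) (by omega)
    have Hi : ∀ s : Fin n, s.val ≠ i → s.val ≠ i + 1 →
        a ⟨j + s.val, by omega⟩ = b ⟨j + s.val, by omega⟩ :=
      fun s hs1 hs2 => H ⟨j + s.val, by omega⟩ (show j + s.val ≠ j + i by omega)
        (show j + s.val ≠ j + i + 1 by omega)
    rw [if_pos Ho, if_pos Hi, if_pos H]
    rfl
  · rw [if_neg H]
    by_cases H2 : ∀ t : Fin m, (t.val < j ∨ j + n ≤ t.val) → a t = b t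
    · have Hni : ¬∀ s : Fin n, s.val ≠ i → s.val ≠ i + 1 →
          a ⟨j + s.val, by omega⟩ = b ⟨j + s.val, by omega⟩ := by
        intro Hin
        apply H
        intro t ht1 ht2
        by_cases htw : j ≤ t.val ∧ t.val < j + n
        · have heq : (⟨j + (t.val - j), by omega⟩ : Fin m) = t :=
            Fin.ext (show j + (t.val - j) = t.val by omega)
          have hthis := Hin ⟨t.val - j, by omega⟩ (show t.val - j ≠ i by omega)
            (show t.val - j ≠ i + 1 by omega)
          exact ((congrArg a heq).symm.trans hthis).trans (congrArg b heq)
        · exact H2 t (by omega)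
      rw [if_pos H2, if_neg Hni]
    · rw [if_neg H2]

end Machinery3
section Algebra

variable {F : Type*} [Field F] {N : ℕ}

lemma lam_ne (q : F) (hqnum : ∀ k : ℕ, 1 ≤ k → qnum q k ≠ 0) : q - q⁻¹ ≠ 0 := by
  intro h
  have h1 := hqnum 1 le_rfl
  rw [qnum, pow_one, pow_one, h, div_zero] at h1
  exact h1 rfl

lemma qnum_succ (q : F) (hq : q ≠ 0) (hlam : q - q⁻¹ ≠ 0) (k : ℕ) :
    qnum q (k + 1) = q ^ k + q⁻¹ * qnum q k := by
  rw [qnum, qnum, div_eq_iff hlam, add_mul, mul_assoc, div_mul_cancel₀ _ hlam]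
  ring

lemma antis_succ_succ (Rh : RMat F N) (q : F) (k : ℕ) :
    antis Rh q (k + 2) =
      (qnum q (k + 2))⁻¹ •
        (embed (k + 2) (antis Rh q (k + 1)) *
          (q ^ (k + 1) • (1 : TensM F N (k + 2)) - qnum q (k + 1) • place2 k Rh) *
          embed (k + 2) (antis Rh q (k + 1))) := by
  rw [antis]

end Algebra
section Algebra2

variable {F : Type*} [Field F] {N : ℕ}

set_option maxHeartbeats 4000000 in
lemma antis_props (q : F) (hq : q ≠ 0) (hqnum : ∀ k : ℕ, 1 ≤ k → qnum q k ≠ 0)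
    (Rh : RMat F N) (hYB : YangBaxter Rh) (hHecke : Hecke q Rh) :
    ∀ n : ℕ, antis Rh q n * antis Rh q n = antis Rh q n ∧
      ∀ p : ℕ, n = p + 2 →
        antis Rh q n * place2 p Rh = (-q⁻¹) • antis Rh q n ∧
        place2 p Rh * antis Rh q n = (-q⁻¹) • antis Rh q n := by
  have hlam : q - q⁻¹ ≠ 0 := lam_ne q hqnum
  have hH : Rh * Rh = 1 + (q - q⁻¹) • Rh := hHecke
  intro n
  induction n using Nat.strong_induction_on with
  | _ n ih =>
  match n, ih with
  | 0, _ => exact ⟨by simp [antis], fun p hp => absurd hp (by omega)⟩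
  | 1, _ => exact ⟨by simp [antis], fun p hp => absurd hp (by omega)⟩
  | 2, _ =>
    have hq1 : qnum q 1 = 1 := by
      rw [show (1:ℕ) = 0 + 1 from rfl, qnum_succ q hq hlam 0]
      simp [qnum]
    have hq2 : qnum q 2 = q + q⁻¹ := by
      rw [show (2:ℕ) = 1 + 1 from rfl, qnum_succ q hq hlam 1, hq1, pow_one, mul_one]
    have h2 : qnum q 2 ≠ 0 := hqnum 2 (by omega)
    have hgg : (place2 0 Rh : TensM F N 2) * place2 0 Rh
        = 1 + (q - q⁻¹) • place2 0 Rh := by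
      rw [← place2_mul (by omega), hH, place2_add, place2_one (by omega), place2_smul]
    have hA2 : antis Rh q 2 = (qnum q 2)⁻¹ •
        (q • (1 : TensM F N 2) - place2 0 Rh) := by
      have h0 := antis_succ_succ Rh q 0
      norm_num at h0
      rw [h0, show antis Rh q 1 = (1 : TensM F N 1) from by rw [antis],
        embed_one (by omega), one_mul, mul_one, hq1, one_smul]
    have hCC : (q • (1 : TensM F N 2) - place2 0 Rh) * (q • (1 : TensM F N 2) - place2 0 Rh)
        = (q + q⁻¹) • (q • (1 : TensM F N 2) - place2 0 Rh) := by
      simp only [sub_mul, mul_sub, smul_mul_assoc, mul_smul_comm, smul_smul, smul_sub,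
        mul_one, one_mul]
      rw [hgg]
      match_scalars <;> field_simp <;> ring
    have hCg : (q • (1 : TensM F N 2) - place2 0 Rh) * place2 0 Rh
        = (-q⁻¹) • (q • (1 : TensM F N 2) - place2 0 Rh) := by
      rw [sub_mul, smul_mul_assoc, one_mul, hgg]
      match_scalars <;> field_simp <;> ring
    have hgC : place2 0 Rh * (q • (1 : TensM F N 2) - place2 0 Rh)
        = (-q⁻¹) • (q • (1 : TensM F N 2) - place2 0 Rh) := by
      rw [mul_sub, mul_smul_comm, mul_one, hgg]
      match_scalars <;> field_simp <;> ring
    refine ⟨?_, fun p hp => ?_⟩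
    · rw [hA2, smul_mul_assoc, mul_smul_comm, smul_smul, hCC, smul_smul]
      congr 1
      rw [← hq2]
      field_simp
    · obtain rfl : p = 0 := by omega
      constructor
      · rw [hA2, smul_mul_assoc, hCg, smul_smul, smul_smul]
        congr 1
        ring
      · rw [hA2, mul_smul_comm, hgC, smul_smul, smul_smul]
        congr 1
        ring
  | (t+3), ih =>
    have hμ : qnum q (t+2) ≠ 0 := hqnum (t+2) (by omega)
    have hν : qnum q (t+3) ≠ 0 := hqnum (t+3) (by omega)
    obtain ⟨ih1, ih2⟩ := ih (t+2) (by omega)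
    have ih1' := (ih (t+1) (by omega)).1
    obtain ⟨iha, ihb⟩ := ih2 t rfl
    set A : TensM F N (t+3) := embed (t+3) (antis Rh q (t+2)) with hA
    set A' : TensM F N (t+3) := embed (t+3) (antis Rh q (t+1)) with hA'
    set g : TensM F N (t+3) := place2 (t+1) Rh with hgdef
    set h : TensM F N (t+3) := place2 t Rh with hhdef
    set a : F := q ^ (t+1) with hadef
    set b : F := qnum q (t+1) with hbdef
    set μ : F := qnum q (t+2) with hμdef
    clear_value A A' g h a b μ
    have f1 : A * A = A := by rw [hA, ← embed_mul (by omega), ih1]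
    have f2 : A' * A' = A' := by rw [hA', ← embed_mul (by omega), ih1']
    have hh_embed : h = embed (t+3) (place2 t Rh : TensM F N (t+2)) := by
      rw [hhdef, embed_place2 (by omega) (by omega)]
    have f3 : A * h = (-q⁻¹) • A := by
      rw [hA, hh_embed, ← embed_mul (by omega), iha, embed_smul]
    have f4 : h * A = (-q⁻¹) • A := by
      rw [hA, hh_embed, ← embed_mul (by omega), ihb, embed_smul]
    have f5 : g * A' = A' * g := by
      rw [hgdef, hA']
      exact embed_comm_place2 (by omega) (by omega) _ Rh
    have f6 : h * (g * h) = g * (h * g) := by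
      have e0 : (place2 t Rh : TensM F N (t+3)) = plant t (t+3) (place2 0 Rh : TensM F N 3) := by
        rw [plant_place2 (i := 0) (j := t) (n := 3) (m := t+3) (by omega) (by omega) Rh]
        rfl
      have e1 : (place2 (t+1) Rh : TensM F N (t+3))
          = plant t (t+3) (place2 1 Rh : TensM F N 3) := by
        rw [plant_place2 (i := 1) (j := t) (n := 3) (m := t+3) (by omega) (by omega) Rh]
      have hyb : (place2 0 Rh : TensM F N 3) * (place2 1 Rh * place2 0 Rh)
          = place2 1 Rh * (place2 0 Rh * place2 1 Rh) := by
        have hyb0 : (place2 0 Rh : TensM F N 3) * place2 1 Rh * place2 0 Rh =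
            place2 1 Rh * place2 0 Rh * place2 1 Rh := hYB
        rw [← mul_assoc, ← mul_assoc, hyb0]
      rw [hgdef, hhdef, e0, e1, ← plant_mul (show t + 3 ≤ t + 3 by omega),
        ← plant_mul (show t + 3 ≤ t + 3 by omega), ← plant_mul (show t + 3 ≤ t + 3 by omega),
        ← plant_mul (show t + 3 ≤ t + 3 by omega), hyb]
    have f7 : g * g = 1 + (q - q⁻¹) • g := by
      rw [hgdef, ← place2_mul (by omega), hH, place2_add, place2_one (by omega), place2_smul]
    have f8 : a • A' - b • (A' * (h * A')) = μ • A := by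
      have hrec := antis_succ_succ Rh q t
      rw [hA, hrec, embed_smul, embed_mul (by omega), embed_mul (by omega),
        embed_embed (by omega) (by omega), embed_sub, embed_smul, embed_smul,
        embed_one (by omega), embed_place2 (by omega) (by omega)]
      rw [← hA', ← hhdef, ← hadef, ← hbdef, ← hμdef]
      rw [smul_smul, mul_inv_cancel₀ hμ, one_smul]
      simp only [mul_sub, sub_mul, mul_smul_comm, smul_mul_assoc, mul_one, one_mul, mul_assoc]
      rw [f2]
    have f9 : A' * A = A := by
      have h0 : μ • (A' * A) = μ • A := by
        rw [← mul_smul_comm, ← f8, mul_sub, mul_smul_comm, f2, mul_smul_comm,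
          show A' * (A' * (h * A')) = (A' * A') * (h * A') from (mul_assoc _ _ _).symm, f2, f8]
      calc A' * A = μ⁻¹ • (μ • (A' * A)) := by rw [smul_smul, inv_mul_cancel₀ hμ, one_smul]
        _ = μ⁻¹ • (μ • A) := by rw [h0]
        _ = A := by rw [smul_smul, inv_mul_cancel₀ hμ, one_smul]
    have f10 : A * A' = A := by
      have h0 : μ • (A * A') = μ • A := by
        rw [← smul_mul_assoc, ← f8, sub_mul, smul_mul_assoc, f2, smul_mul_assoc,
          show A' * (h * A') * A' = A' * (h * (A' * A')) from by
            rw [mul_assoc, mul_assoc], f2, f8]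
      calc A * A' = μ⁻¹ • (μ • (A * A')) := by rw [smul_smul, inv_mul_cancel₀ hμ, one_smul]
        _ = μ⁻¹ • (μ • A) := by rw [h0]
        _ = A := by rw [smul_smul, inv_mul_cancel₀ hμ, one_smul]
    have w1 : A * (g * A') = A * g := by
      rw [f5, ← mul_assoc A A' g, f10]
    have w2 : A * (g * (A' * (h * A'))) = A * (g * (h * A')) := by
      rw [← mul_assoc g A' (h * A'), f5, mul_assoc A' g (h * A'),
        ← mul_assoc A A' (g * (h * A')), f10]
    have star0 : μ • (A * (g * A)) = a • (A * g) - b • (A * (g * (h * A'))) := by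
      calc μ • (A * (g * A)) = A * (g * (μ • A)) := by rw [mul_smul_comm, mul_smul_comm]
        _ = A * (g * (a • A' - b • (A' * (h * A')))) := by rw [← f8]
        _ = a • (A * (g * A')) - b • (A * (g * (A' * (h * A')))) := by
            simp only [mul_sub, mul_smul_comm]
        _ = a • (A * g) - b • (A * (g * (h * A'))) := by rw [w1, w2]
    have star : b • (A * (g * (h * A'))) = a • (A * g) - μ • (A * (g * A)) := by
      rw [star0]; module
    have w1' : A' * (g * A) = g * A := by
      rw [← mul_assoc A' g A, ← f5, mul_assoc g A' A, f9]
    have star0' : μ • (A * (g * A)) = a • (g * A) - b • (A' * (h * (g * A))) := by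
      calc μ • (A * (g * A)) = (μ • A) * (g * A) := by rw [smul_mul_assoc]
        _ = (a • A' - b • (A' * (h * A'))) * (g * A) := by rw [← f8]
        _ = a • (A' * (g * A)) - b • (A' * (h * A') * (g * A)) := by
            simp only [sub_mul, smul_mul_assoc]
        _ = a • (g * A) - b • (A' * (h * (g * A))) := by
            rw [w1', mul_assoc A' (h * A') (g * A), mul_assoc h A' (g * A), w1']
    have star' : b • (A' * (h * (g * A))) = a • (g * A) - μ • (A * (g * A)) := by
      rw [star0']; module
    have hassoc1 : (A * g) * (A * g) = (A * (g * A)) * g := by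
      rw [mul_assoc A g (A * g), ← mul_assoc g A g, ← mul_assoc A (g * A) g]
    have hK : μ • ((A * g) * (A * g))
        = a • A + (q * a) • (A * g) - (q⁻¹ * μ) • (A * (g * A)) := by
      calc μ • ((A * g) * (A * g)) = (μ • (A * (g * A))) * g := by
            rw [hassoc1, smul_mul_assoc]
        _ = (a • (A * g) - b • (A * (g * (h * A')))) * g := by rw [star0]
        _ = a • ((A * g) * g) - b • ((A * (g * (h * A'))) * g) := by
            simp only [sub_mul, smul_mul_assoc]
        _ = a • (A * (g * g)) - b • (A * (g * (h * (A' * g)))) := by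
            rw [mul_assoc A g g, mul_assoc A (g * (h * A')) g, mul_assoc g (h * A') g,
              mul_assoc h A' g]
        _ = a • (A * (g * g)) - b • (A * ((g * (h * g)) * A')) := by
            rw [← f5, ← mul_assoc h g A', ← mul_assoc g (h * g) A']
        _ = a • (A * (g * g)) - b • ((A * h) * (g * (h * A'))) := by
            rw [← f6, mul_assoc h (g * h) A', mul_assoc g h A', ← mul_assoc A h (g * (h * A'))]
        _ = a • (A * (g * g)) - b • (((-q⁻¹) • A) * (g * (h * A'))) := by rw [f3]
        _ = a • (A + (q - q⁻¹) • (A * g)) - (b * (-q⁻¹)) • (A * (g * (h * A'))) := by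
            rw [f7, mul_add A, mul_one, mul_smul_comm, smul_mul_assoc, smul_smul]
        _ = a • A + (a * (q - q⁻¹)) • (A * g) + q⁻¹ • (b • (A * (g * (h * A')))) := by
            module
        _ = a • A + (a * (q - q⁻¹)) • (A * g) + q⁻¹ • (a • (A * g) - μ • (A * (g * A))) := by
            rw [star]
        _ = a • A + (q * a) • (A * g) - (q⁻¹ * μ) • (A * (g * A)) := by module
    have hassoc1' : (g * A) * (g * A) = g * (A * (g * A)) := mul_assoc g A (g * A)
    have hK' : μ • ((g * A) * (g * A))
        = a • A + (q * a) • (g * A) - (q⁻¹ * μ) • (A * (g * A)) := by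
      calc μ • ((g * A) * (g * A)) = g * (μ • (A * (g * A))) := by
            rw [hassoc1', mul_smul_comm]
        _ = g * (a • (g * A) - b • (A' * (h * (g * A)))) := by rw [star0']
        _ = a • (g * (g * A)) - b • (g * (A' * (h * (g * A)))) := by
            simp only [mul_sub, mul_smul_comm]
        _ = a • ((g * g) * A) - b • (A' * (g * (h * (g * A)))) := by
            rw [← mul_assoc g g A, ← mul_assoc g A' (h * (g * A)), f5,
              mul_assoc A' g (h * (g * A))]
        _ = a • ((g * g) * A) - b • (A' * ((g * (h * g)) * A)) := by
            rw [← mul_assoc h g A, ← mul_assoc g (h * g) A]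
        _ = a • ((g * g) * A) - b • (A' * (h * (g * (h * A)))) := by
            rw [← f6, mul_assoc h (g * h) A, mul_assoc g h A]
        _ = a • ((g * g) * A) - b • (A' * (h * (g * ((-q⁻¹) • A)))) := by rw [f4]
        _ = a • ((1 + (q - q⁻¹) • g) * A) - (b * (-q⁻¹)) • (A' * (h * (g * A))) := by
            rw [f7, mul_smul_comm, mul_smul_comm, mul_smul_comm, smul_smul]
        _ = a • (A + (q - q⁻¹) • (g * A)) + q⁻¹ • (b • (A' * (h * (g * A)))) := by
            rw [add_mul, one_mul, smul_mul_assoc]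
            module
        _ = a • (A + (q - q⁻¹) • (g * A)) + q⁻¹ • (a • (g * A) - μ • (A * (g * A))) := by
            rw [star']
        _ = a • A + (q * a) • (g * A) - (q⁻¹ * μ) • (A * (g * A)) := by module
    have hC : antis Rh q (t+3) = (qnum q (t+3))⁻¹ • ((a * q) • A - μ • (A * (g * A))) := by
      have hrec := antis_succ_succ Rh q (t+1)
      simp only [show t+1+2 = t+3 from rfl, show t+1+1 = t+2 from rfl] at hrec
      have hInner : A * (q ^ (t+2) • (1 : TensM F N (t+3)) - μ • g) * A
          = (a * q) • A - μ • (A * (g * A)) := by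
        rw [show q ^ (t+2) = a * q from by rw [hadef, pow_succ]]
        simp only [mul_sub, sub_mul, mul_smul_comm, smul_mul_assoc, mul_one, mul_assoc]
        rw [f1]
      rw [hrec, ← hA, ← hgdef, ← hμdef, hInner]
    have hνrec : qnum q (t+3) = q * a + q⁻¹ * μ := by
      rw [show t+3 = (t+2)+1 from rfl, qnum_succ q hq hlam (t+2), hμdef, hadef, pow_succ]
      ring
    have p1 : A * (A * (g * A)) = A * (g * A) := by rw [← mul_assoc A A (g * A), f1]
    have p2 : (A * (g * A)) * A = A * (g * A) := by
      rw [mul_assoc A (g * A) A, mul_assoc g A A, f1]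
    have hassoc6 : ((A * g) * (A * g)) * A = (A * (g * A)) * (A * (g * A)) := by
      calc ((A * g) * (A * g)) * A = A * (g * (A * (g * A))) := by
            rw [mul_assoc A g (A * g), mul_assoc A (g * (A * g)) A, mul_assoc g (A * g) A,
              mul_assoc A g A]
        _ = (A * (g * A)) * (A * (g * A)) := by
            rw [mul_assoc A (g * A) (A * (g * A)), mul_assoc g A (A * (g * A)), p1]
    have p3 : μ • ((A * (g * A)) * (A * (g * A)))
        = a • A + (q * a - q⁻¹ * μ) • (A * (g * A)) := by
      rw [← hassoc6, ← smul_mul_assoc, hK]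
      simp only [sub_mul, add_mul, smul_mul_assoc]
      rw [f1, mul_assoc A g A, p2]
      module
    have hCC : ((a * q) • A - μ • (A * (g * A))) * ((a * q) • A - μ • (A * (g * A)))
        = qnum q (t+3) • ((a * q) • A - μ • (A * (g * A))) := by
      calc ((a * q) • A - μ • (A * (g * A))) * ((a * q) • A - μ • (A * (g * A)))
          = (a * q) • (A * ((a * q) • A - μ • (A * (g * A))))
            - μ • ((A * (g * A)) * ((a * q) • A - μ • (A * (g * A)))) := by
            rw [sub_mul, smul_mul_assoc, smul_mul_assoc]
        _ = (a * q) • ((a * q) • A - μ • (A * (g * A)))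
            - μ • ((a * q) • (A * (g * A)) - μ • ((A * (g * A)) * (A * (g * A)))) := by
            simp only [mul_sub, mul_smul_comm]
            rw [f1, p1, p2]
        _ = (a * q) • ((a * q) • A) - ((a * q) * μ) • (A * (g * A))
            - μ • ((a * q) • (A * (g * A))) + μ • (μ • ((A * (g * A)) * (A * (g * A)))) := by
            module
        _ = (a * q) • ((a * q) • A) - ((a * q) * μ) • (A * (g * A))
            - μ • ((a * q) • (A * (g * A)))
            + μ • (a • A + (q * a - q⁻¹ * μ) • (A * (g * A))) := by
            rw [p3]
        _ = qnum q (t+3) • ((a * q) • A - μ • (A * (g * A))) := by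
            rw [hνrec]
            match_scalars <;> field_simp <;> ring
    have hCg : ((a * q) • A - μ • (A * (g * A))) * g
        = (-q⁻¹) • ((a * q) • A - μ • (A * (g * A))) := by
      rw [sub_mul, smul_mul_assoc, smul_mul_assoc, ← hassoc1, hK]
      match_scalars <;> field_simp <;> ring
    have hgC : g * ((a * q) • A - μ • (A * (g * A)))
        = (-q⁻¹) • ((a * q) • A - μ • (A * (g * A))) := by
      rw [mul_sub, mul_smul_comm, mul_smul_comm, ← hassoc1', hK']
      match_scalars <;> field_simp <;> ring
    refine ⟨?_, fun p hp => ?_⟩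
    · rw [hC, smul_mul_assoc, mul_smul_comm, smul_smul, hCC, smul_smul]
      rw [show (qnum q (t+3))⁻¹ * (qnum q (t+3))⁻¹ * qnum q (t+3) = (qnum q (t+3))⁻¹ from by
        field_simp]
    · obtain rfl : p = t + 1 := by omega
      rw [← hgdef, hC]
      constructor
      · rw [smul_mul_assoc, hCg, smul_smul, smul_smul]
        rw [show (qnum q (t+3))⁻¹ * -q⁻¹ = -q⁻¹ * (qnum q (t+3))⁻¹ from by ring]
      · rw [mul_smul_comm, hgC, smul_smul, smul_smul]
        rw [show (qnum q (t+3))⁻¹ * -q⁻¹ = -q⁻¹ * (qnum q (t+3))⁻¹ from by ring]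


end Algebra2

theorem antisymmetrizer_recursion {F : Type*} [Field F] {N : ℕ} (hN : 1 ≤ N) (q : F) (hq : q ≠ 0)
    (hqnum : ∀ k : ℕ, 1 ≤ k → qnum q k ≠ 0)
    (Rh : RMat F N) (hRinv : IsUnit Rh.det)
    (hYB : YangBaxter Rh) (hHecke : Hecke q Rh)
    (k : ℕ) (hk1 : 1 ≤ k) :
    q ^ k • embed (k + 1) (antis Rh q k) =
      qnum q (k + 1) • antis Rh q (k + 1) +
        qnum q k •
          (embed (k + 1) (antis Rh q k) * place2 (k - 1) Rh *
            embed (k + 1) (antis Rh q k)) := by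
  obtain ⟨j, rfl⟩ : ∃ j, k = j + 1 := ⟨k - 1, by omega⟩
  have hν : qnum q (j + 2) ≠ 0 := hqnum _ (by omega)
  have idem := (antis_props q hq hqnum Rh hYB hHecke (j + 1)).1
  simp only [show j + 1 + 1 = j + 2 from rfl, show j + 1 - 1 = j from rfl]
  set E : TensM F N (j + 2) := embed (j + 2) (antis Rh q (j + 1)) with hE
  clear_value E
  have hEE : E * E = E := by rw [hE, ← embed_mul (by omega), idem]
  have hunf := antis_succ_succ Rh q j
  rw [hunf, ← hE, smul_smul, mul_inv_cancel₀ hν, one_smul]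
  simp only [mul_sub, sub_mul, mul_smul_comm, smul_mul_assoc, mul_one, mul_assoc]
  rw [hEE]
  module
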